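/- arXiv:2107.05711 — 4 statements merged into one kernel-verified Lean document; each statement's English description precedes it below -/
import Mathlib

section
/- The family W = {(W_i, v_i)}_{i∈I} is a (C,C')-controlled Bessel fusion sequence for H (i.e., there exists B > 0 with Σ_{i∈I} v_i² ‖(C*π_{W_i}C')^{1/2} f‖² ≤ B‖f‖² for all f ∈ H) if and only if for every f ∈ H the series Σ_{i∈I} v_i² C*π_{W_i}C' f converges in H. -/
/-!
With `A i = v i • (C* π_{W i} C')^{1/2}` we have `A i* A i = v i ^ 2 • C* π_{W i} C'` and
`‖A i f‖² = v i ^ 2 ‖(C* π_{W i} C')^{1/2} f‖²`, so the claim is: `∑ ‖A i f‖² ≤ B ‖f‖²` for all `f`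
iff `∑ A i* A i f` converges for all `f`.

If the Bessel bound holds, Cauchy–Schwarz bounds the synthesis sums,
`‖∑_{i ∈ t} A i* x i‖² ≤ B ∑_{i ∈ t} ‖x i‖²` for finite `t`, and with `x i = A i f` the Cauchy
criterion for `∑ ‖A i f‖²` transfers to `∑ A i* A i f`. Conversely, if the series converges
everywhere, `S f = ∑ A i* A i f` is an everywhere defined symmetric operator, hence bounded by
Hellinger–Toeplitz, and `∑ ‖A i f‖² = ⟪f, S f⟫ ≤ ‖S‖ ‖f‖²`.
-/

open ContinuousLinearMap

/-- The controlled operator `C* ∘ π_W ∘ C'`. -/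
noncomputable def ctrlOp {H : Type*} [NormedAddCommGroup H] [InnerProductSpace ℂ H]
    [CompleteSpace H] (C C' : H →L[ℂ] H) (W : Submodule ℂ H) [CompleteSpace W] :
    H →L[ℂ] H :=
  ContinuousLinearMap.adjoint C ∘L ((W.subtypeL ∘L W.orthogonalProjectionOnto) ∘L C')

section Summability

variable {ι E : Type*} [NormedAddCommGroup E] [CompleteSpace E]

lemma summable_of_norm_sum_sq_le {g : ι → E} {r : ι → ℝ} (hr : Summable r) {B : ℝ}
    (hB : 0 < B) (hg : ∀ t : Finset ι, ‖∑ i ∈ t, g i‖ ^ 2 ≤ B * ∑ i ∈ t, r i) :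
    Summable g := by
  rw [summable_iff_vanishing_norm]
  intro ε hε
  obtain ⟨s, hs⟩ := summable_iff_vanishing_norm.mp hr (ε ^ 2 / B) (by positivity)
  refine ⟨s, fun t ht => ?_⟩
  have hsmall : ‖∑ i ∈ t, g i‖ ^ 2 < ε ^ 2 :=
    calc ‖∑ i ∈ t, g i‖ ^ 2 ≤ B * ∑ i ∈ t, r i := hg t
      _ ≤ B * ‖∑ i ∈ t, r i‖ := by gcongr; exact Real.le_norm_self _
      _ < B * (ε ^ 2 / B) := by gcongr; exact hs t ht
      _ = ε ^ 2 := by field_simp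
  exact lt_of_pow_lt_pow_left₀ 2 hε.le hsmall

end Summability

section PointwiseTsum

variable {ι 𝕜 E F : Type*} [NontriviallyNormedField 𝕜] [NormedAddCommGroup E] [NormedSpace 𝕜 E]
  [NormedAddCommGroup F] [NormedSpace 𝕜 F]

noncomputable def LinearMap.pointwiseTsum (G : ι → E →ₗ[𝕜] F)
    (hG : ∀ f, Summable fun i => G i f) : E →ₗ[𝕜] F where
  toFun f := ∑' i, G i f
  map_add' f g := by
    simp only [map_add]
    exact (hG f).tsum_add (hG g)
  map_smul' c f := by
    simp only [map_smul, RingHom.id_apply]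
    exact (hG f).tsum_const_smul c

end PointwiseTsum

section SymmetricPointwiseTsum

variable {ι 𝕜 H : Type*} [RCLike 𝕜] [NormedAddCommGroup H] [InnerProductSpace 𝕜 H]

lemma LinearMap.inner_pointwiseTsum {G : ι → H →ₗ[𝕜] H} (hG : ∀ f, Summable fun i => G i f)
    (f g : H) : inner 𝕜 f (pointwiseTsum G hG g) = ∑' i, inner 𝕜 f (G i g) :=
  (innerSL 𝕜 f).map_tsum (hG g)

lemma LinearMap.IsSymmetric.pointwiseTsum {G : ι → H →ₗ[𝕜] H}
    (hG : ∀ f, Summable fun i => G i f) (hsymm : ∀ i, (G i).IsSymmetric) :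
    (pointwiseTsum G hG).IsSymmetric := by
  intro f g
  rw [← inner_conj_symm, inner_pointwiseTsum, inner_pointwiseTsum, RCLike.conj_tsum]
  simp only [inner_conj_symm, hsymm _ f g]

end SymmetricPointwiseTsum

section Bessel

variable {ι 𝕜 H E : Type*} [RCLike 𝕜] [NormedAddCommGroup H] [InnerProductSpace 𝕜 H]
  [CompleteSpace H] [NormedAddCommGroup E] [InnerProductSpace 𝕜 E] [CompleteSpace E]

def IsBesselFamily (A : ι → H →L[𝕜] E) : Prop :=
  ∃ B : ℝ, 0 < B ∧ ∀ f : H,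
    Summable (fun i => ‖A i f‖ ^ 2) ∧ ∑' i, ‖A i f‖ ^ 2 ≤ B * ‖f‖ ^ 2

lemma inner_adjoint_apply_self (A : H →L[𝕜] E) (f : H) :
    inner 𝕜 f (adjoint A (A f)) = ((‖A f‖ ^ 2 : ℝ) : 𝕜) := by
  rw [adjoint_inner_right, inner_self_eq_norm_sq_to_K, RCLike.ofReal_pow]

lemma norm_sum_adjoint_sq_le {A : ι → H →L[𝕜] E} {B : ℝ} (hB : 0 ≤ B)
    (hA : ∀ (t : Finset ι) (f : H), ∑ i ∈ t, ‖A i f‖ ^ 2 ≤ B * ‖f‖ ^ 2)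
    (t : Finset ι) (x : ι → E) :
    ‖∑ i ∈ t, adjoint (A i) (x i)‖ ^ 2 ≤ B * ∑ i ∈ t, ‖x i‖ ^ 2 := by
  set u := ∑ i ∈ t, adjoint (A i) (x i)
  set X := ∑ i ∈ t, ‖x i‖ ^ 2
  have hu : ‖u‖ ^ 2 ≤ √X * (√B * ‖u‖) :=
    calc ‖u‖ ^ 2 = ∑ i ∈ t, RCLike.re (inner 𝕜 (x i) (A i u)) := by
          simp only [← inner_self_eq_norm_sq (𝕜 := 𝕜), u, sum_inner, adjoint_inner_left,
            map_sum]
      _ ≤ ∑ i ∈ t, ‖x i‖ * ‖A i u‖ := Finset.sum_le_sum fun i _ => re_inner_le_norm _ _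
      _ ≤ √X * √(∑ i ∈ t, ‖A i u‖ ^ 2) := Real.sum_mul_le_sqrt_mul_sqrt _ _ _
      _ ≤ √X * (√B * ‖u‖) := by
          gcongr
          rw [← Real.sqrt_sq (norm_nonneg u), ← Real.sqrt_mul hB]
          exact Real.sqrt_le_sqrt (hA t u)
  have hu' : ‖u‖ ≤ √X * √B := by
    rcases (norm_nonneg u).eq_or_lt with h | h
    · rw [← h]; positivity
    · nlinarith
  calc ‖u‖ ^ 2 ≤ (√X * √B) ^ 2 := by gcongr
    _ = B * X := by rw [mul_pow, Real.sq_sqrt (by positivity), Real.sq_sqrt hB, mul_comm]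

lemma IsBesselFamily.summable_adjoint_apply {A : ι → H →L[𝕜] E} (hA : IsBesselFamily A)
    (f : H) : Summable fun i => adjoint (A i) (A i f) := by
  obtain ⟨B, hB, hbound⟩ := hA
  have hfinite (t : Finset ι) (g : H) : ∑ i ∈ t, ‖A i g‖ ^ 2 ≤ B * ‖g‖ ^ 2 :=
    ((hbound g).1.sum_le_tsum t fun i _ => by positivity).trans (hbound g).2
  exact summable_of_norm_sum_sq_le (hbound f).1 hB
    (norm_sum_adjoint_sq_le hB.le hfinite · fun i => A i f)

lemma isBesselFamily_of_summable_adjoint_apply {A : ι → H →L[𝕜] E}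
    (hA : ∀ f, Summable fun i => adjoint (A i) (A i f)) : IsBesselFamily A := by
  let G : ι → H →ₗ[𝕜] H := fun i => adjoint (A i) ∘L A i
  have hG : ∀ i, (G i).IsSymmetric := fun i =>
    (isPositive_adjoint_comp_self (A i)).isSelfAdjoint.isSymmetric
  have hGA : ∀ f, Summable fun i => G i f := hA
  -- bounded by Hellinger–Toeplitz
  let S : H →L[𝕜] H :=
    ⟨LinearMap.pointwiseTsum G hGA, (LinearMap.IsSymmetric.pointwiseTsum hGA hG).continuous⟩
  refine ⟨‖S‖ + 1, by positivity, fun f => ?_⟩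
  have hsum : HasSum (fun i => ‖A i f‖ ^ 2) (RCLike.re (inner 𝕜 f (S f))) := by
    have := RCLike.hasSum_re 𝕜 ((hA f).hasSum.mapL (innerSL 𝕜 f))
    simp only [innerSL_apply_apply, inner_adjoint_apply_self, RCLike.ofReal_re] at this
    exact this
  refine ⟨hsum.summable, ?_⟩
  calc ∑' i, ‖A i f‖ ^ 2 = RCLike.re (inner 𝕜 f (S f)) := hsum.tsum_eq
    _ ≤ ‖f‖ * ‖S f‖ := re_inner_le_norm _ _
    _ ≤ ‖f‖ * (‖S‖ * ‖f‖) := by gcongr; exact S.le_opNorm f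
    _ ≤ (‖S‖ + 1) * ‖f‖ ^ 2 := by nlinarith [norm_nonneg f, norm_nonneg S]

theorem isBesselFamily_iff_summable_adjoint_apply {A : ι → H →L[𝕜] E} :
    IsBesselFamily A ↔ ∀ f, Summable fun i => adjoint (A i) (A i f) :=
  ⟨IsBesselFamily.summable_adjoint_apply, isBesselFamily_of_summable_adjoint_apply⟩

end Bessel

theorem stmt_3_general {H : Type*} [NormedAddCommGroup H] [InnerProductSpace ℂ H] [CompleteSpace H]
    {ι : Type*}
    (C C' : H →L[ℂ] H)
    (W : ι → Submodule ℂ H) [∀ i, CompleteSpace (W i)]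
    (v : ι → ℝ)
    (sq : ι → H →L[ℂ] H)
    (hsq_pos : ∀ i, (sq i).IsPositive)
    (hsq_sq : ∀ i, sq i ∘L sq i = ctrlOp C C' (W i)) :
    (∃ B : ℝ, 0 < B ∧ ∀ f : H,
        Summable (fun i => v i ^ 2 * ‖sq i f‖ ^ 2) ∧
        (∑' i, v i ^ 2 * ‖sq i f‖ ^ 2) ≤ B * ‖f‖ ^ 2) ↔
    (∀ f : H, Summable (fun i => (v i ^ 2) • ctrlOp C C' (W i) f)) := by
  let A : ι → H →L[ℂ] H := fun i => (v i : ℂ) • sq i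
  have hnorm (i : ι) (f : H) : ‖A i f‖ ^ 2 = v i ^ 2 * ‖sq i f‖ ^ 2 := by
    simp [A, norm_smul, mul_pow]
  have hadj (i : ι) (f : H) : adjoint (A i) (A i f) = v i ^ 2 • ctrlOp C C' (W i) f := by
    have hsa : adjoint (A i) = A i := by
      simp only [A, map_smulₛₗ, Complex.conj_ofReal, (hsq_pos i).isSelfAdjoint.adjoint_eq]
    rw [hsa]
    simp [A, ← hsq_sq i, smul_smul, pow_two]
  have := isBesselFamily_iff_summable_adjoint_apply (A := A)
  simpa only [IsBesselFamily, hnorm, hadj] using this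

/-- `{(W i, v i)}` is a `(C,C')`-controlled Bessel fusion sequence for `H`
iff for every `f ∈ H` the series `∑ i, v i ^ 2 • (C* π_{W i} C') f` converges in `H`. -/
theorem stmt_3 {H : Type*} [NormedAddCommGroup H] [InnerProductSpace ℂ H] [CompleteSpace H]
    {ι : Type*} [Countable ι]
    (C C' : H →L[ℂ] H) (hC : IsUnit C) (hC' : IsUnit C')
    (W : ι → Submodule ℂ H) [∀ i, CompleteSpace (W i)]
    (v : ι → ℝ) (hv : ∀ i, 0 < v i)
    (sq : ι → H →L[ℂ] H)
    (hGpos : ∀ i, (ctrlOp C C' (W i)).IsPositive)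
    (hsq_pos : ∀ i, (sq i).IsPositive)
    (hsq_sq : ∀ i, sq i ∘L sq i = ctrlOp C C' (W i)) :
    (∃ B : ℝ, 0 < B ∧ ∀ f : H,
        Summable (fun i => v i ^ 2 * ‖sq i f‖ ^ 2) ∧
        (∑' i, v i ^ 2 * ‖sq i f‖ ^ 2) ≤ B * ‖f‖ ^ 2) ↔
    (∀ f : H, Summable (fun i => (v i ^ 2) • ctrlOp C C' (W i) f)) :=
  stmt_3_general C C' W v sq hsq_pos hsq_sq
end

section
/- Let W = {(W_i, v_i)}_{i∈I} be a (C,C')-controlled fusion frame for H with bounds A and B, and let J ⊆ I. If Σ_{i∈J} v_i² = B, then every f ∈ ⋂_{i∈J} M_i satisfies (C*π_{W_i}C')^{1/2} f = 0 for all i ∈ I∖J; that is, ⋂_{i∈J} M_i ⊆ ⋂_{i∈I∖J} ker (C*π_{W_i}C')^{1/2}. -/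
open ContinuousLinearMap

theorem Summable.eq_zero_of_tsum_le_tsum_subtype {ι : Type*} {g : ι → ℝ} (hg : Summable g)
    (hg₀ : ∀ i, 0 ≤ g i) {J : Set ι} (hle : ∑' i, g i ≤ ∑' j : J, g j) {i : ι} (hi : i ∉ J) :
    g i = 0 := by
  have hcompl : ∑' j : (Jᶜ : Set ι), g j = 0 := by
    have hsplit := Summable.tsum_add_tsum_compl (hg.subtype J) (hg.subtype Jᶜ)
    exact le_antisymm (by linarith) (tsum_nonneg fun j => hg₀ j)
  refine le_antisymm ?_ (hg₀ i)
  exact hcompl ▸ (hg.subtype Jᶜ).le_tsum ⟨i, hi⟩ fun j _ => hg₀ j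

theorem stmt_5_general {H : Type*} [NormedAddCommGroup H] [InnerProductSpace ℂ H]
    {ι : Type*}
    (v : ι → ℝ) (hv : ∀ i, 0 < v i)
    (sq : ι → H →L[ℂ] H)
    (A B : ℝ)
    (hframe : ∀ f : H,
      Summable (fun i => v i ^ 2 * ‖sq i f‖ ^ 2) ∧
      A * ‖f‖ ^ 2 ≤ ∑' i, v i ^ 2 * ‖sq i f‖ ^ 2 ∧
      (∑' i, v i ^ 2 * ‖sq i f‖ ^ 2) ≤ B * ‖f‖ ^ 2)
    (J : Set ι)
    (hJ : ∑' i : J, v i ^ 2 = B) :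
    ∀ f : H, (∀ i ∈ J, sq i f = f) → ∀ i ∉ J, sq i f = 0 := by
  intro f hf i hi
  obtain ⟨hsum, -, hup⟩ := hframe f
  have hJval : ∑' j : J, v j ^ 2 * ‖sq j f‖ ^ 2 = B * ‖f‖ ^ 2 := by
    rw [← hJ, ← tsum_mul_right]
    exact tsum_congr fun j => by rw [hf j j.2]
  have hterm := hsum.eq_zero_of_tsum_le_tsum_subtype (fun j => by positivity) (hup.trans hJval.ge) hi
  simpa [(hv i).ne'] using hterm

/-- If `{(W i, v i)}` is a `(C,C')`-controlled fusion frame with bounds `A, B`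
and `J ⊆ I` satisfies `∑_{i ∈ J} v i ^ 2 = B`, then every `f` fixed by all
`(C* π_{W i} C')^{1/2}`, `i ∈ J`, is killed by `(C* π_{W i} C')^{1/2}` for all `i ∉ J`. -/
theorem stmt_5 {H : Type*} [NormedAddCommGroup H] [InnerProductSpace ℂ H] [CompleteSpace H]
    {ι : Type*} [Countable ι]
    (C C' : H →L[ℂ] H) (hC : IsUnit C) (hC' : IsUnit C')
    (W : ι → Submodule ℂ H) [∀ i, CompleteSpace (W i)]
    (v : ι → ℝ) (hv : ∀ i, 0 < v i)
    (sq : ι → H →L[ℂ] H)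
    (hGpos : ∀ i, (ctrlOp C C' (W i)).IsPositive)
    (hsq_pos : ∀ i, (sq i).IsPositive)
    (hsq_sq : ∀ i, sq i ∘L sq i = ctrlOp C C' (W i))
    (A B : ℝ) (hA : 0 < A) (hAB : A ≤ B)
    (hframe : ∀ f : H,
      Summable (fun i => v i ^ 2 * ‖sq i f‖ ^ 2) ∧
      A * ‖f‖ ^ 2 ≤ ∑' i, v i ^ 2 * ‖sq i f‖ ^ 2 ∧
      (∑' i, v i ^ 2 * ‖sq i f‖ ^ 2) ≤ B * ‖f‖ ^ 2)
    (J : Set ι)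
    (hJsum : Summable (fun i : J => v i ^ 2))
    (hJ : ∑' i : J, v i ^ 2 = B) :
    ∀ f : H, (∀ i ∈ J, sq i f = f) → ∀ i ∉ J, sq i f = 0 :=
  stmt_5_general v hv sq A B hframe J hJ
end

section
/- Let W = {(W_i, v_i)}_{i∈I} be a (C,C')-controlled fusion frame for H with bounds A and B. If there exists i₀ ∈ I such that v_{i₀}² ‖C*π_{W_{i₀}}C'‖ < A, then {(W_i, v_i)}_{i∈I, i≠i₀} is a (C,C')-controlled fusion frame for H with bounds A − v_{i₀}² ‖C*π_{W_{i₀}}C'‖ and B. -/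
open ContinuousLinearMap

/-!
Removing the index `i₀` removes the single term `v i₀² ‖G^{1/2} f‖²` from the frame sum,
where `G = C* π_{W i₀} C'`. Since `G^{1/2}` is self-adjoint, the C*-identity gives
`‖G^{1/2}‖² = ‖G‖`, so this term is at most `v i₀² ‖G‖ ‖f‖²`; the lower bound drops by at most
that amount and the upper bound survives because all terms are nonnegative.
-/

theorem IsSelfAdjoint.norm_apply_sq_le {𝕜 E : Type*} [RCLike 𝕜] [NormedAddCommGroup E]
    [InnerProductSpace 𝕜 E] [CompleteSpace E] {T : E →L[𝕜] E} (hT : IsSelfAdjoint T) (f : E) :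
    ‖T f‖ ^ 2 ≤ ‖T ∘L T‖ * ‖f‖ ^ 2 := by
  rw [← mul_def, hT.norm_mul_self, ← mul_pow]
  gcongr
  exact T.le_opNorm f

theorem tsum_eq_add_tsum_subtype_ne {ι α : Type*} [AddCommGroup α] [UniformSpace α]
    [IsUniformAddGroup α] [CompleteSpace α] [T2Space α] {g : ι → α} (hg : Summable g) (i₀ : ι) :
    ∑' i, g i = g i₀ + ∑' i : {i : ι // i ≠ i₀}, g i := by
  rw [← hg.tsum_subtype_add_tsum_subtype_compl {i₀}, tsum_singleton]
  rfl

theorem stmt_7_general {H : Type*} [NormedAddCommGroup H] [InnerProductSpace ℂ H] [CompleteSpace H]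
    {ι : Type*}
    (C C' : H →L[ℂ] H)
    (W : ι → Submodule ℂ H) [∀ i, CompleteSpace (W i)]
    (v : ι → ℝ)
    (sq : ι → H →L[ℂ] H)
    (hsq_pos : ∀ i, (sq i).IsPositive)
    (hsq_sq : ∀ i, sq i ∘L sq i = ctrlOp C C' (W i))
    (A B : ℝ)
    (hframe : ∀ f : H,
      Summable (fun i => v i ^ 2 * ‖sq i f‖ ^ 2) ∧
      A * ‖f‖ ^ 2 ≤ ∑' i, v i ^ 2 * ‖sq i f‖ ^ 2 ∧
      (∑' i, v i ^ 2 * ‖sq i f‖ ^ 2) ≤ B * ‖f‖ ^ 2)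
    (i₀ : ι) :
    ∀ f : H,
      Summable (fun i : {i : ι // i ≠ i₀} => v i ^ 2 * ‖sq i f‖ ^ 2) ∧
      (A - v i₀ ^ 2 * ‖ctrlOp C C' (W i₀)‖) * ‖f‖ ^ 2 ≤
        ∑' i : {i : ι // i ≠ i₀}, v i ^ 2 * ‖sq i f‖ ^ 2 ∧
      (∑' i : {i : ι // i ≠ i₀}, v i ^ 2 * ‖sq i f‖ ^ 2) ≤ B * ‖f‖ ^ 2 := by
  intro f
  obtain ⟨hsum, hlower, hupper⟩ := hframe f
  have hsplit := tsum_eq_add_tsum_subtype_ne hsum i₀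
  have hremoved : v i₀ ^ 2 * ‖sq i₀ f‖ ^ 2 ≤ v i₀ ^ 2 * ‖ctrlOp C C' (W i₀)‖ * ‖f‖ ^ 2 := by
    rw [mul_assoc, ← hsq_sq i₀]
    gcongr
    exact (hsq_pos i₀).isSelfAdjoint.norm_apply_sq_le f
  have hnonneg : 0 ≤ v i₀ ^ 2 * ‖sq i₀ f‖ ^ 2 := by positivity
  exact ⟨hsum.subtype _, by linarith, by linarith⟩

/-- If `{(W i, v i)}` is a `(C,C')`-controlled fusion frame with bounds `A, B`
and `v i₀ ^ 2 * ‖C* π_{W i₀} C'‖ < A` for some `i₀`, then `{(W i, v i)}_{i ≠ i₀}` is a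
`(C,C')`-controlled fusion frame with bounds `A - v i₀ ^ 2 * ‖C* π_{W i₀} C'‖` and `B`. -/
theorem stmt_7 {H : Type*} [NormedAddCommGroup H] [InnerProductSpace ℂ H] [CompleteSpace H]
    {ι : Type*} [Countable ι]
    (C C' : H →L[ℂ] H) (hC : IsUnit C) (hC' : IsUnit C')
    (W : ι → Submodule ℂ H) [∀ i, CompleteSpace (W i)]
    (v : ι → ℝ) (hv : ∀ i, 0 < v i)
    (sq : ι → H →L[ℂ] H)
    (hGpos : ∀ i, (ctrlOp C C' (W i)).IsPositive)
    (hsq_pos : ∀ i, (sq i).IsPositive)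
    (hsq_sq : ∀ i, sq i ∘L sq i = ctrlOp C C' (W i))
    (A B : ℝ) (hA : 0 < A) (hAB : A ≤ B)
    (hframe : ∀ f : H,
      Summable (fun i => v i ^ 2 * ‖sq i f‖ ^ 2) ∧
      A * ‖f‖ ^ 2 ≤ ∑' i, v i ^ 2 * ‖sq i f‖ ^ 2 ∧
      (∑' i, v i ^ 2 * ‖sq i f‖ ^ 2) ≤ B * ‖f‖ ^ 2)
    (i₀ : ι) (hi₀ : v i₀ ^ 2 * ‖ctrlOp C C' (W i₀)‖ < A) :
    ∀ f : H,
      Summable (fun i : {i : ι // i ≠ i₀} => v i ^ 2 * ‖sq i f‖ ^ 2) ∧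
      (A - v i₀ ^ 2 * ‖ctrlOp C C' (W i₀)‖) * ‖f‖ ^ 2 ≤
        ∑' i : {i : ι // i ≠ i₀}, v i ^ 2 * ‖sq i f‖ ^ 2 ∧
      (∑' i : {i : ι // i ≠ i₀}, v i ^ 2 * ‖sq i f‖ ^ 2) ≤ B * ‖f‖ ^ 2 :=
  stmt_7_general C C' W v sq hsq_pos hsq_sq A B hframe i₀
end

section
/- Let H be an n-dimensional complex Hilbert space (n < ∞) and let W = {(W_i, v_i)}_{i=1}^{m} be a Parseval (C,C')-controlled fusion frame for H (bounds A = B = 1), with C*π_{W_i}C' positive for every i. Then n ≤ ‖C‖ · ‖C'‖ · Σ_{i=1}^{m} v_i² · dim W_i. -/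
open ContinuousLinearMap

/-!
Summing the Parseval identity over an orthonormal basis `e` of `H` gives
`n = ∑ⱼ ‖eⱼ‖² = ∑ᵢ vᵢ² Re tr (C* π_{Wᵢ} C')`. By cyclicity the trace of `C* π_W C'` is the trace
of the compression of `C' C*` to `W`, whose real part is at most `dim W · ‖C'‖ ‖C‖`.
-/

open scoped InnerProductSpace

section Trace

variable {𝕜 E F : Type*} [RCLike 𝕜] [NormedAddCommGroup E] [InnerProductSpace 𝕜 E]
  [NormedAddCommGroup F] [InnerProductSpace 𝕜 F]

lemma ContinuousLinearMap.re_trace_le_opNorm_mul_finrank [FiniteDimensional 𝕜 E] (T : E →L[𝕜] E) :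
    RCLike.re (LinearMap.trace 𝕜 E T) ≤ ‖T‖ * Module.finrank 𝕜 E := by
  let b := stdOrthonormalBasis 𝕜 E
  have hb : ∀ k, ‖b k‖ = 1 := b.orthonormal.1
  have hterm : ∀ k, RCLike.re ⟪b k, T (b k)⟫_𝕜 ≤ ‖T‖ := fun k =>
    calc RCLike.re ⟪b k, T (b k)⟫_𝕜 ≤ ‖b k‖ * ‖T (b k)‖ := re_inner_le_norm _ _
      _ ≤ ‖b k‖ * (‖T‖ * ‖b k‖) := by gcongr; exact T.le_opNorm _
      _ = ‖T‖ := by rw [hb]; ring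
  calc RCLike.re (LinearMap.trace 𝕜 E T) = ∑ k, RCLike.re ⟪b k, T (b k)⟫_𝕜 := by
        rw [LinearMap.trace_eq_sum_inner _ b, map_sum]; rfl
    _ ≤ ∑ _k, ‖T‖ := Finset.sum_le_sum fun k _ => hterm k
    _ = ‖T‖ * Module.finrank 𝕜 E := by simp [mul_comm]

lemma finrank_eq_sum_re_trace_adjoint_comp_self [FiniteDimensional 𝕜 E] [CompleteSpace E]
    [CompleteSpace F] {ι : Type*} [Fintype ι] (w : ι → ℝ) (A : ι → E →L[𝕜] F)
    (hA : ∀ x, ∑ i, w i * ‖A i x‖ ^ 2 = ‖x‖ ^ 2) :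
    (Module.finrank 𝕜 E : ℝ) =
      ∑ i, w i * RCLike.re (LinearMap.trace 𝕜 E (adjoint (A i) ∘L A i)) := by
  let e := stdOrthonormalBasis 𝕜 E
  calc (Module.finrank 𝕜 E : ℝ) = ∑ j, ‖e j‖ ^ 2 := by simp [e.orthonormal.1]
    _ = ∑ j, ∑ i, w i * ‖A i (e j)‖ ^ 2 := by simp only [hA]
    _ = ∑ i, w i * ∑ j, RCLike.re ⟪e j, (adjoint (A i) ∘L A i) (e j)⟫_𝕜 := by
        rw [Finset.sum_comm]
        simp only [Finset.mul_sum, apply_norm_sq_eq_inner_adjoint_right]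
    _ = ∑ i, w i * RCLike.re (LinearMap.trace 𝕜 E (adjoint (A i) ∘L A i)) := by
        simp only [LinearMap.trace_eq_sum_inner _ e, map_sum]; rfl

end Trace

lemma re_trace_ctrlOp_le {H : Type*} [NormedAddCommGroup H] [InnerProductSpace ℂ H]
    [FiniteDimensional ℂ H] (C C' : H →L[ℂ] H) (W : Submodule ℂ H) :
    (LinearMap.trace ℂ H (ctrlOp C C' W)).re ≤ ‖C‖ * ‖C'‖ * Module.finrank ℂ W := by
  let T : W →L[ℂ] W := W.orthogonalProjectionOnto ∘L C' ∘L adjoint C ∘L W.subtypeL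
  have htrace : LinearMap.trace ℂ H (ctrlOp C C' W) = LinearMap.trace ℂ W T :=
    (LinearMap.trace_comp_comm' ((adjoint C ∘L W.subtypeL : W →L[ℂ] H) : W →ₗ[ℂ] H)
      ((W.orthogonalProjectionOnto ∘L C' : H →L[ℂ] W) : H →ₗ[ℂ] W)).symm
  have hT : ‖T‖ ≤ ‖C‖ * ‖C'‖ :=
    calc ‖T‖ ≤ ‖W.orthogonalProjectionOnto‖ * (‖C'‖ * (‖adjoint C‖ * ‖W.subtypeL‖)) := by
          refine (opNorm_comp_le _ _).trans ?_
          gcongr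
          refine (opNorm_comp_le _ _).trans ?_
          gcongr
          exact opNorm_comp_le _ _
      _ ≤ 1 * (‖C'‖ * (‖C‖ * 1)) := by
          rw [LinearIsometryEquiv.norm_map]
          gcongr
          · exact W.orthogonalProjectionOnto_norm_le
          · exact Submodule.norm_subtypeL_le W
      _ = ‖C‖ * ‖C'‖ := by ring
  calc (LinearMap.trace ℂ H (ctrlOp C C' W)).re = RCLike.re (LinearMap.trace ℂ W T) := by
        rw [htrace]; rfl
    _ ≤ ‖T‖ * Module.finrank ℂ W := ContinuousLinearMap.re_trace_le_opNorm_mul_finrank T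
    _ ≤ ‖C‖ * ‖C'‖ * Module.finrank ℂ W := by gcongr

theorem stmt_9_general {H : Type*} [NormedAddCommGroup H] [InnerProductSpace ℂ H] [CompleteSpace H]
    [FiniteDimensional ℂ H] {n : ℕ} (hn : Module.finrank ℂ H = n)
    {m : ℕ}
    (C C' : H →L[ℂ] H)
    (W : Fin m → Submodule ℂ H)
    (v : Fin m → ℝ)
    (sq : Fin m → H →L[ℂ] H)
    (hsq_pos : ∀ i, (sq i).IsPositive)
    (hsq_sq : ∀ i, sq i ∘L sq i = ctrlOp C C' (W i))
    (hParseval : ∀ f : H, ∑ i, v i ^ 2 * ‖sq i f‖ ^ 2 = ‖f‖ ^ 2) :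
    (n : ℝ) ≤ ‖C‖ * ‖C'‖ * ∑ i, v i ^ 2 * (Module.finrank ℂ (W i) : ℝ) := by
  have hgram : ∀ i, adjoint (sq i) ∘L sq i = ctrlOp C C' (W i) := fun i => by
    rw [(hsq_pos i).isSelfAdjoint.adjoint_eq, hsq_sq i]
  rw [← hn, finrank_eq_sum_re_trace_adjoint_comp_self _ sq hParseval, Finset.mul_sum]
  refine Finset.sum_le_sum fun i _ => ?_
  rw [hgram, mul_left_comm]
  exact mul_le_mul_of_nonneg_left (re_trace_ctrlOp_le C C' (W i)) (sq_nonneg _)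

/-- If `{(W i, v i)}_{i=1}^m` is a Parseval `(C,C')`-controlled fusion frame
for an `n`-dimensional complex Hilbert space `H`, then
`n ≤ ‖C‖ * ‖C'‖ * ∑ i, v i ^ 2 * dim (W i)`. -/
theorem stmt_9 {H : Type*} [NormedAddCommGroup H] [InnerProductSpace ℂ H] [CompleteSpace H]
    [FiniteDimensional ℂ H] {n : ℕ} (hn : Module.finrank ℂ H = n)
    {m : ℕ}
    (C C' : H →L[ℂ] H) (hC : IsUnit C) (hC' : IsUnit C')
    (W : Fin m → Submodule ℂ H)
    (v : Fin m → ℝ) (hv : ∀ i, 0 < v i)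
    (sq : Fin m → H →L[ℂ] H)
    (hGpos : ∀ i, (ctrlOp C C' (W i)).IsPositive)
    (hsq_pos : ∀ i, (sq i).IsPositive)
    (hsq_sq : ∀ i, sq i ∘L sq i = ctrlOp C C' (W i))
    (hParseval : ∀ f : H, ∑ i, v i ^ 2 * ‖sq i f‖ ^ 2 = ‖f‖ ^ 2) :
    (n : ℝ) ≤ ‖C‖ * ‖C'‖ * ∑ i, v i ^ 2 * (Module.finrank ℂ (W i) : ℝ) :=
  stmt_9_general hn C C' W v sq hsq_pos hsq_sq hParseval
end
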